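/- Let K = K(N,D) be a fractal square. If the third approximation K⁽³⁾ is connected, then K is connected. -/

import Mathlib

open Set Metric Topology Pointwise Filter

noncomputable section

abbrev Plane : Type := EuclideanSpace ℝ (Fin 2)

/-- The closed unit square `[0,1]²` in the plane. -/
def unitSq : Set Plane := {x | x 0 ∈ Icc (0:ℝ) 1 ∧ x 1 ∈ Icc (0:ℝ) 1}

/-- The embedding of `ℤ²` into the plane. -/
def emb (d : ℤ × ℤ) : Plane := WithLp.toLp 2 ![(d.1 : ℝ), (d.2 : ℝ)]

/-- The `n`-th approximation `K⁽ⁿ⁾` of the fractal square: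
`K⁽⁰⁾ = [0,1]²`, `K⁽ⁿ⁾ = ⋃_{d ∈ D} (K⁽ⁿ⁻¹⁾ + d) / N`. -/
def approx (N : ℕ) (D : Finset (ℤ × ℤ)) : ℕ → Set Plane
  | 0 => unitSq
  | n + 1 => ⋃ d ∈ D, (fun x => (N : ℝ)⁻¹ • (x + emb d)) '' approx N D n

/-- The fractal square `K = K(N, D) = ⋂_{n ≥ 1} K⁽ⁿ⁾`. -/
def FS (N : ℕ) (D : Finset (ℤ × ℤ)) : Set Plane := ⋂ n : ℕ, approx N D (n + 1)

/-- The lattice `ℤ² ⊆ ℝ²`. -/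
def lattice : Set Plane := Set.range emb

/-- `H = K + ℤ²`. -/
def orbitH (N : ℕ) (D : Finset (ℤ × ℤ)) : Set Plane := FS N D + lattice

/-- A digit set for order `N`: a subset of `{0, …, N-1}²` with at least two elements. -/
def IsDigitSet (N : ℕ) (D : Finset (ℤ × ℤ)) : Prop :=
  2 ≤ D.card ∧ ∀ d ∈ D, 0 ≤ d.1 ∧ d.1 ≤ (N : ℤ) - 1 ∧ 0 ≤ d.2 ∧ d.2 ≤ (N : ℤ) - 1

-- aux
lemma emb_apply0 (d : ℤ × ℤ) : emb d 0 = (d.1 : ℝ) := rfl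
lemma emb_apply1 (d : ℤ × ℤ) : emb d 1 = (d.2 : ℝ) := rfl

lemma emb_add (a b : ℤ × ℤ) : emb (a + b) = emb a + emb b := by
  ext i
  fin_cases i <;> simp [emb] <;> push_cast <;> ring

lemma emb_zero : emb 0 = 0 := by
  ext i; fin_cases i <;> simp [emb] <;> rfl

lemma emb_sub (a b : ℤ × ℤ) : emb (a - b) = emb a - emb b := by
  ext i
  fin_cases i <;> simp [emb] <;> push_cast <;> ring

lemma emb_nsmul (N : ℕ) (a : ℤ × ℤ) : emb ((N:ℤ) • a) = (N:ℝ) • emb a := by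
  ext i
  fin_cases i <;> simp [emb] <;> push_cast <;> ring

lemma unitSq_eq_pi : unitSq = (EuclideanSpace.equiv (Fin 2) ℝ) ⁻¹' (Set.pi univ fun _ => Icc (0:ℝ) 1) := by
  ext x
  simp only [unitSq, mem_setOf_eq, mem_preimage, Set.mem_pi, mem_univ, true_implies,
    Fin.forall_fin_two]
  exact Iff.rfl

lemma isCompact_unitSq : IsCompact unitSq := by
  rw [unitSq_eq_pi]
  have h : IsCompact (Set.pi univ fun _ : Fin 2 => Icc (0:ℝ) 1) :=
    isCompact_univ_pi fun _ => isCompact_Icc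
  exact (EuclideanSpace.equiv (Fin 2) ℝ).toHomeomorph.isCompact_preimage.2 h

lemma zero_mem_unitSq : (0 : Plane) ∈ unitSq := by
  constructor <;> simp

/-! ### Auxiliary development -/

section Aux

variable {N : ℕ} {D : Finset (ℤ × ℤ)}

lemma mem_approx_succ {x : Plane} {n : ℕ} :
    x ∈ approx N D (n + 1) ↔ ∃ d ∈ D, ∃ y ∈ approx N D n, (N : ℝ)⁻¹ • (y + emb d) = x := by
  simp [approx, mem_iUnion, Set.mem_image]

lemma mem_approx_succ' (hN : 2 ≤ N) {x : Plane} {n : ℕ} :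
    x ∈ approx N D (n + 1) ↔ ∃ d ∈ D, (N : ℝ) • x - emb d ∈ approx N D n := by
  have hN0 : (N : ℝ) ≠ 0 := by
    have : 0 < N := by omega
    exact_mod_cast this.ne'
  rw [mem_approx_succ]
  constructor
  · rintro ⟨d, hd, y, hy, rfl⟩
    refine ⟨d, hd, ?_⟩
    have : (N : ℝ) • ((N : ℝ)⁻¹ • (y + emb d)) - emb d = y := by
      rw [smul_smul, mul_inv_cancel₀ hN0, one_smul]; abel
    rwa [this]
  · rintro ⟨d, hd, hy⟩
    refine ⟨d, hd, _, hy, ?_⟩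
    rw [sub_add_cancel, smul_smul, inv_mul_cancel₀ hN0, one_smul]

lemma approx_subset_unitSq (hN : 2 ≤ N) (hD : IsDigitSet N D) :
    ∀ n, approx N D n ⊆ unitSq := by
  intro n
  induction n with
  | zero => exact fun x hx => hx
  | succ n ih =>
    intro x hx
    rw [mem_approx_succ] at hx
    obtain ⟨d, hd, y, hy, rfl⟩ := hx
    have hy' : y ∈ unitSq := ih hy
    obtain ⟨hd1, hd2, hd3, hd4⟩ := hD.2 d hd
    have hNpos : (0:ℝ) < N := by exact_mod_cast (by omega : 0 < N)
    have key : ∀ (a : ℝ) (b : ℤ), a ∈ Icc (0:ℝ) 1 → 0 ≤ b → b ≤ (N:ℤ) - 1 →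
        (N:ℝ)⁻¹ * (a + b) ∈ Icc (0:ℝ) 1 := by
      intro a b ha hb0 hb1
      have hb0' : (0:ℝ) ≤ b := by exact_mod_cast hb0
      have hb1' : (b:ℝ) ≤ (N:ℝ) - 1 := by exact_mod_cast hb1
      constructor
      · have : (0:ℝ) ≤ a + b := by linarith [ha.1]
        positivity
      · rw [inv_mul_le_iff₀ hNpos, mul_one]
        linarith [ha.2]
    constructor
    · have := key (y 0) d.1 hy'.1 hd1 hd2
      simpa [emb_apply0, mul_add] using this
    · have := key (y 1) d.2 hy'.2 hd3 hd4
      simpa [emb_apply1, mul_add] using this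

lemma approx_succ_subset (hN : 2 ≤ N) (hD : IsDigitSet N D) :
    ∀ n, approx N D (n + 1) ⊆ approx N D n := by
  intro n
  induction n with
  | zero => exact approx_subset_unitSq hN hD 1
  | succ n ih =>
    intro x hx
    rw [mem_approx_succ] at hx ⊢
    obtain ⟨d, hd, y, hy, rfl⟩ := hx
    exact ⟨d, hd, y, ih hy, rfl⟩

lemma approx_le_subset (hN : 2 ≤ N) (hD : IsDigitSet N D) {m n : ℕ} (h : m ≤ n) :
    approx N D n ⊆ approx N D m := by
  induction h with
  | refl => exact fun x hx => hx
  | step h ih => exact fun x hx => ih (approx_succ_subset hN hD _ hx)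

lemma continuous_fmap (d : ℤ × ℤ) :
    Continuous (fun x : Plane => (N : ℝ)⁻¹ • (x + emb d)) :=
  by fun_prop

lemma isCompact_approx : ∀ n, IsCompact (approx N D n) := by
  intro n
  induction n with
  | zero => exact isCompact_unitSq
  | succ n ih =>
    have : approx N D (n+1) = ⋃ d ∈ D, (fun x => (N : ℝ)⁻¹ • (x + emb d)) '' approx N D n := by
      simp [approx]
    rw [this]
    exact D.finite_toSet.isCompact_biUnion fun d _ => ih.image (continuous_fmap d)

lemma isClosed_approx (n : ℕ) : IsClosed (approx N D n) :=
  (isCompact_approx n).isClosed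

lemma nonempty_approx (hD : IsDigitSet N D) : ∀ n, (approx N D n).Nonempty := by
  intro n
  induction n with
  | zero => exact ⟨0, zero_mem_unitSq⟩
  | succ n ih =>
    obtain ⟨y, hy⟩ := ih
    have hDne : D.Nonempty := Finset.card_pos.mp (lt_of_lt_of_le (by norm_num) hD.1)
    obtain ⟨d, hd⟩ := hDne
    exact ⟨_, mem_approx_succ.2 ⟨d, hd, y, hy, rfl⟩⟩

end Aux
section Del

/-- The set of integer translations `v` such that `K⁽ⁿ⁾` meets `K⁽ⁿ⁾ + v`. -/
def Del (N : ℕ) (D : Finset (ℤ × ℤ)) (n : ℕ) : Set (ℤ × ℤ) :=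
  {v | ∃ x, x ∈ approx N D n ∧ x - emb v ∈ approx N D n}

variable {N : ℕ} {D : Finset (ℤ × ℤ)}

lemma Ncast_ne (hN : 2 ≤ N) : (N : ℝ) ≠ 0 := by
  have : 0 < N := by omega
  exact_mod_cast this.ne'

lemma zero_mem_del (hD : IsDigitSet N D) (n : ℕ) : (0 : ℤ × ℤ) ∈ Del N D n := by
  obtain ⟨x, hx⟩ := nonempty_approx hD n
  exact ⟨x, hx, by rw [emb_zero, sub_zero]; exact hx⟩

lemma del_subset_del_zero (hN : 2 ≤ N) (hD : IsDigitSet N D) (n : ℕ) :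
    Del N D n ⊆ Del N D 0 := by
  rintro v ⟨x, hx, hx'⟩
  exact ⟨x, approx_le_subset hN hD (Nat.zero_le n) hx,
    approx_le_subset hN hD (Nat.zero_le n) hx'⟩

lemma sub_emb_apply0 (x : Plane) (v : ℤ × ℤ) : (x - emb v) 0 = x 0 - (v.1 : ℝ) := rfl
lemma sub_emb_apply1 (x : Plane) (v : ℤ × ℤ) : (x - emb v) 1 = x 1 - (v.2 : ℝ) := rfl

lemma del_zero_iff {v : ℤ × ℤ} :
    v ∈ Del N D 0 ↔ -1 ≤ v.1 ∧ v.1 ≤ 1 ∧ -1 ≤ v.2 ∧ v.2 ≤ 1 := by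
  constructor
  · rintro ⟨x, hx, hx'⟩
    have h0 := hx.1
    have h1 := hx.2
    have h0' := hx'.1
    have h1' := hx'.2
    rw [sub_emb_apply0] at h0'
    rw [sub_emb_apply1] at h1'
    have c1 : (-1 : ℝ) ≤ (v.1 : ℝ) := by linarith [h0.1, h0.2, h0'.1, h0'.2]
    have c2 : (v.1 : ℝ) ≤ 1 := by linarith [h0.1, h0.2, h0'.1, h0'.2]
    have c3 : (-1 : ℝ) ≤ (v.2 : ℝ) := by linarith [h1.1, h1.2, h1'.1, h1'.2]
    have c4 : (v.2 : ℝ) ≤ 1 := by linarith [h1.1, h1.2, h1'.1, h1'.2]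
    exact ⟨by exact_mod_cast c1, by exact_mod_cast c2, by exact_mod_cast c3,
      by exact_mod_cast c4⟩
  · rintro ⟨h1, h2, h3, h4⟩
    refine ⟨emb (max v.1 0, max v.2 0), ⟨?_, ?_⟩, ?_⟩
    · rw [emb_apply0]
      constructor
      · exact_mod_cast (by omega : (0:ℤ) ≤ (max v.1 0, max v.2 0).1)
      · exact_mod_cast (by simp; omega : (max v.1 0, max v.2 0).1 ≤ 1)
    · rw [emb_apply1]
      constructor
      · exact_mod_cast (by omega : (0:ℤ) ≤ (max v.1 0, max v.2 0).2)
      · exact_mod_cast (by simp; omega : (max v.1 0, max v.2 0).2 ≤ 1)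
    · constructor
      · rw [sub_emb_apply0, emb_apply0]
        constructor
        · have : (0:ℤ) ≤ max v.1 0 - v.1 := by omega
          have := (Int.cast_le (R := ℝ)).2 this
          push_cast at this ⊢; linarith
        · have : max v.1 0 - v.1 ≤ (1:ℤ) := by omega
          have := (Int.cast_le (R := ℝ)).2 this
          push_cast at this ⊢; linarith
      · rw [sub_emb_apply1, emb_apply1]
        constructor
        · have : (0:ℤ) ≤ max v.2 0 - v.2 := by omega
          have := (Int.cast_le (R := ℝ)).2 this
          push_cast at this ⊢; linarith
        · have : max v.2 0 - v.2 ≤ (1:ℤ) := by omega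
          have := (Int.cast_le (R := ℝ)).2 this
          push_cast at this ⊢; linarith

lemma emb_lin (v d e : ℤ × ℤ) :
    emb ((N:ℤ) • v - d + e) = (N:ℝ) • emb v - emb d + emb e := by
  rw [emb_add, emb_sub, emb_nsmul]

lemma del_succ_iff (hN : 2 ≤ N) {v : ℤ × ℤ} {n : ℕ} :
    v ∈ Del N D (n + 1) ↔ ∃ d ∈ D, ∃ e ∈ D, (N:ℤ) • v - d + e ∈ Del N D n := by
  have hN0 := Ncast_ne hN
  constructor
  · rintro ⟨x, hx, hx'⟩
    rw [mem_approx_succ' hN] at hx hx'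
    obtain ⟨d, hd, hy⟩ := hx
    obtain ⟨e, he, hz⟩ := hx'
    refine ⟨d, hd, e, he, (N:ℝ) • x - emb d, hy, ?_⟩
    have : (N:ℝ) • x - emb d - emb ((N:ℤ) • v - d + e) = (N:ℝ) • (x - emb v) - emb e := by
      rw [emb_lin, smul_sub]; abel
    rwa [this]
  · rintro ⟨d, hd, e, he, y, hy, hy'⟩
    refine ⟨(N:ℝ)⁻¹ • (y + emb d), ?_, ?_⟩
    · rw [mem_approx_succ' hN]
      refine ⟨d, hd, ?_⟩
      have : (N:ℝ) • ((N:ℝ)⁻¹ • (y + emb d)) - emb d = y := by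
        rw [smul_smul, mul_inv_cancel₀ hN0, one_smul]; abel
      rwa [this]
    · rw [mem_approx_succ' hN]
      refine ⟨e, he, ?_⟩
      have : (N:ℝ) • ((N:ℝ)⁻¹ • (y + emb d) - emb v) - emb e
          = y - emb ((N:ℤ) • v - d + e) := by
        rw [smul_sub, smul_smul, mul_inv_cancel₀ hN0, one_smul, emb_lin]; abel
      rwa [this]

end Del
section Core

variable {N : ℕ} {D : Finset (ℤ × ℤ)}

/-- One-dimensional force lemma: if `N*v - d + e = w` with digits in `[0, N-1]`
and `v, w ∈ {-1,0,1}` and `v ≠ 0`, then `w = v`. -/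
lemma force_coord {N : ℕ} (hN : 2 ≤ N) {d e v w : ℤ}
    (hd0 : 0 ≤ d) (hd1 : d ≤ (N:ℤ) - 1) (he0 : 0 ≤ e) (he1 : e ≤ (N:ℤ) - 1)
    (hv1 : -1 ≤ v) (hv2 : v ≤ 1) (hw1 : -1 ≤ w) (hw2 : w ≤ 1)
    (heq : (N:ℤ) * v - d + e = w) (hvne : v ≠ 0) : w = v := by
  have hN' : (2:ℤ) ≤ (N:ℤ) := by exact_mod_cast hN
  interval_cases v <;> omega

lemma fst_eq {v d e w : ℤ × ℤ} (h : (N:ℤ) • v - d + e = w) :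
    (N:ℤ) * v.1 - d.1 + e.1 = w.1 := by
  rw [← h]; simp [smul_eq_mul]

lemma snd_eq {v d e w : ℤ × ℤ} (h : (N:ℤ) • v - d + e = w) :
    (N:ℤ) * v.2 - d.2 + e.2 = w.2 := by
  rw [← h]; simp [smul_eq_mul]

/-- The key combinatorial stability lemma: `Δ₂ ⊆ Δ₃`. -/
lemma del_two_subset_three (hN : 2 ≤ N) (hD : IsDigitSet N D) :
    Del N D 2 ⊆ Del N D 3 := by
  intro v hv
  by_cases hv0 : v = 0
  · subst hv0; exact zero_mem_del hD 3
  obtain ⟨d, hd, e, he, h2⟩ := (del_succ_iff hN).1 hv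
  set w : ℤ × ℤ := (N:ℤ) • v - d + e with hw
  obtain ⟨d', hd', e', he', h1⟩ := (del_succ_iff hN).1 h2
  set u : ℤ × ℤ := (N:ℤ) • w - d' + e' with hu
  -- bounds
  obtain ⟨hvb1, hvb2, hvb3, hvb4⟩ := del_zero_iff.1 (del_subset_del_zero hN hD 2 hv)
  obtain ⟨hwb1, hwb2, hwb3, hwb4⟩ := del_zero_iff.1 (del_subset_del_zero hN hD 1 h2)
  obtain ⟨hub1, hub2, hub3, hub4⟩ := del_zero_iff.1 (del_subset_del_zero hN hD 0 h1)
  obtain ⟨hd01, hd11, hd02, hd12⟩ := hD.2 d hd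
  obtain ⟨he01, he11, he02, he12⟩ := hD.2 e he
  obtain ⟨hd01', hd11', hd02', hd12'⟩ := hD.2 d' hd'
  obtain ⟨he01', he11', he02', he12'⟩ := hD.2 e' he'
  have hweq1 : (N:ℤ) * v.1 - d.1 + e.1 = w.1 := fst_eq rfl
  have hweq2 : (N:ℤ) * v.2 - d.2 + e.2 = w.2 := snd_eq rfl
  have hueq1 : (N:ℤ) * w.1 - d'.1 + e'.1 = u.1 := fst_eq rfl
  have hueq2 : (N:ℤ) * w.2 - d'.2 + e'.2 = u.2 := snd_eq rfl
  by_cases hwv : w = v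
  · -- "chain A" : use the pair (d, e) twice, then (d', e')
    apply (del_succ_iff hN).2
    refine ⟨d, hd, e, he, ?_⟩
    rw [← hw]
    apply (del_succ_iff hN).2
    refine ⟨d, hd, e, he, ?_⟩
    have : (N:ℤ) • w - d + e = w := by rw [hwv, ← hw]; exact hwv
    rw [this]
    exact h2
  · -- "chain B" : use (d, e) then (d', e') twice; here `u = w`.
    have hv1ne_or : w.1 ≠ 0 ∧ w.2 ≠ 0 := by
      constructor
      · intro hw1z
        have hv1z : v.1 = 0 := by
          by_contra hne
          exact hne (by rw [← force_coord hN hd01 hd11 he01 he11 hvb1 hvb2 hwb1 hwb2 hweq1 hne,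
            hw1z])
        rcases eq_or_ne w.2 v.2 with h2eq | h2ne
        · exact hwv (Prod.ext (by rw [hw1z, hv1z]) h2eq)
        · have hv2z : v.2 = 0 := by
            by_contra hne
            exact h2ne (force_coord hN hd02 hd12 he02 he12 hvb3 hvb4 hwb3 hwb4 hweq2 hne)
          exact hv0 (Prod.ext hv1z hv2z)
      · intro hw2z
        have hv2z : v.2 = 0 := by
          by_contra hne
          exact hne (by rw [← force_coord hN hd02 hd12 he02 he12 hvb3 hvb4 hwb3 hwb4 hweq2 hne,
            hw2z])
        rcases eq_or_ne w.1 v.1 with h1eq | h1ne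
        · exact hwv (Prod.ext h1eq (by rw [hw2z, hv2z]))
        · have hv1z : v.1 = 0 := by
            by_contra hne
            exact h1ne (force_coord hN hd01 hd11 he01 he11 hvb1 hvb2 hwb1 hwb2 hweq1 hne)
          exact hv0 (Prod.ext hv1z hv2z)
    have huw : u = w := by
      refine Prod.ext ?_ ?_
      · exact force_coord hN hd01' hd11' he01' he11' hwb1 hwb2 hub1 hub2 hueq1 hv1ne_or.1
      · exact force_coord hN hd02' hd12' he02' he12' hwb3 hwb4 hub3 hub4 hueq2 hv1ne_or.2
    apply (del_succ_iff hN).2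
    refine ⟨d, hd, e, he, ?_⟩
    rw [← hw]
    apply (del_succ_iff hN).2
    refine ⟨d', hd', e', he', ?_⟩
    rw [← hu, huw]
    exact h2

lemma del_two_subset (hN : 2 ≤ N) (hD : IsDigitSet N D) :
    ∀ n, 2 ≤ n → Del N D 2 ⊆ Del N D n := by
  intro n
  induction n with
  | zero => omega
  | succ n ih =>
    intro hn
    rcases Nat.lt_or_ge n 2 with h | h
    · intro v hv
      have h2 : n + 1 = 2 := by omega
      rw [h2]
      exact hv
    · intro v hv
      obtain ⟨d, hd, e, he, hmem⟩ := (del_succ_iff hN).1 (del_two_subset_three hN hD hv)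
      exact (del_succ_iff hN).2 ⟨d, hd, e, he, ih h hmem⟩

end Core
section Pieces

variable {N : ℕ} {D : Finset (ℤ × ℤ)}

/-- The piece `f_d(K⁽ⁿ⁾)` of `K⁽ⁿ⁺¹⁾`. -/
def piece (N : ℕ) (D : Finset (ℤ × ℤ)) (n : ℕ) (d : ℤ × ℤ) : Set Plane :=
  (fun x => (N : ℝ)⁻¹ • (x + emb d)) '' approx N D n

lemma approx_succ_eq_biUnion (n : ℕ) :
    approx N D (n + 1) = ⋃ d ∈ D, piece N D n d := by
  simp [approx, piece]

lemma piece_subset (n : ℕ) {d : ℤ × ℤ} (hd : d ∈ D) :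
    piece N D n d ⊆ approx N D (n + 1) := by
  rw [approx_succ_eq_biUnion]
  exact subset_biUnion_of_mem hd

lemma isClosed_piece (n : ℕ) (d : ℤ × ℤ) : IsClosed (piece N D n d) :=
  ((isCompact_approx n).image (continuous_fmap d)).isClosed

lemma nonempty_piece (hD : IsDigitSet N D) (n : ℕ) (d : ℤ × ℤ) :
    (piece N D n d).Nonempty :=
  (nonempty_approx hD n).image _

lemma piece_inter_nonempty_iff (hN : 2 ≤ N) {n : ℕ} {d e : ℤ × ℤ} :
    (piece N D n d ∩ piece N D n e).Nonempty ↔ (e - d) ∈ Del N D n := by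
  have hN0 := Ncast_ne hN
  constructor
  · rintro ⟨x, ⟨y, hy, hyx⟩, ⟨z, hz, hzx⟩⟩
    have h1 : y + emb d = z + emb e := by
      have := hyx.trans hzx.symm
      have h2 := congrArg (fun t => (N:ℝ) • t) this
      simpa [smul_smul, mul_inv_cancel₀ hN0, one_smul] using h2
    refine ⟨y, hy, ?_⟩
    have : y - emb (e - d) = z := by
      rw [emb_sub]
      have h3 := h1
      abel_nf
      linear_combination (norm := abel_nf) h3
    rwa [this]
  · rintro ⟨y, hy, hz⟩
    refine ⟨(N:ℝ)⁻¹ • (y + emb d), ⟨y, hy, rfl⟩, ⟨y - emb (e - d), hz, ?_⟩⟩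
    rw [emb_sub]
    congr 1
    abel
end Pieces

section Glue

variable {N : ℕ} {D : Finset (ℤ × ℤ)}

/-- Connectivity of `K⁽³⁾` yields connectivity of the adjacency graph of level-2 pieces. -/
lemma reflTransGen_of_connected (hN : 2 ≤ N) (hD : IsDigitSet N D)
    (h3 : IsConnected (approx N D 3)) :
    ∀ d ∈ D, ∀ e ∈ D, Relation.ReflTransGen
      (fun a b => (piece N D 2 a ∩ piece N D 2 b).Nonempty ∧ a ∈ (D : Set (ℤ × ℤ))) d e := by
  intro d hd e he
  by_contra hcon
  set R : (ℤ × ℤ) → (ℤ × ℤ) → Prop :=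
    fun a b => (piece N D 2 a ∩ piece N D 2 b).Nonempty ∧ a ∈ (D : Set (ℤ × ℤ)) with hR
  set T : Set (ℤ × ℤ) := {c | c ∈ (D : Set (ℤ × ℤ)) ∧ Relation.ReflTransGen R d c} with hT
  have hTfin : T.Finite := D.finite_toSet.subset fun c hc => hc.1
  have hDTfin : ((D : Set (ℤ × ℤ)) \ T).Finite := D.finite_toSet.subset diff_subset
  set U : Set Plane := ⋃ c ∈ T, piece N D 2 c with hU
  set W : Set Plane := ⋃ c ∈ ((D : Set (ℤ × ℤ)) \ T), piece N D 2 c with hW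
  have hUc : IsClosed U := hTfin.isClosed_biUnion fun c _ => isClosed_piece 2 c
  have hWc : IsClosed W := hDTfin.isClosed_biUnion fun c _ => isClosed_piece 2 c
  have hcover : approx N D 3 ⊆ U ∪ W := by
    rw [show (3:ℕ) = 2 + 1 from rfl, approx_succ_eq_biUnion]
    intro x hx
    rw [mem_iUnion₂] at hx
    obtain ⟨c, hc, hxc⟩ := hx
    by_cases hcT : c ∈ T
    · exact Or.inl (mem_biUnion hcT hxc)
    · exact Or.inr (mem_biUnion ⟨hc, hcT⟩ hxc)
  have hdT : d ∈ T := ⟨hd, Relation.ReflTransGen.refl⟩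
  have heT : e ∈ (D : Set (ℤ × ℤ)) \ T := ⟨he, fun hmem => hcon hmem.2⟩
  have hmeetU : (approx N D 3 ∩ U).Nonempty := by
    obtain ⟨x, hx⟩ := nonempty_piece hD 2 d
    exact ⟨x, piece_subset 2 hd hx, mem_biUnion hdT hx⟩
  have hmeetW : (approx N D 3 ∩ W).Nonempty := by
    obtain ⟨x, hx⟩ := nonempty_piece hD 2 e
    exact ⟨x, piece_subset 2 he hx, mem_biUnion heT hx⟩
  have hpre := h3.isPreconnected
  rw [isPreconnected_closed_iff] at hpre
  obtain ⟨x, _, hxU, hxW⟩ := hpre U W hUc hWc hcover hmeetU hmeetW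
  rw [mem_iUnion₂] at hxU hxW
  obtain ⟨c, hcT, hxc⟩ := hxU
  obtain ⟨c', hc'T, hxc'⟩ := hxW
  have hRcc' : R c c' := ⟨⟨x, hxc, hxc'⟩, hcT.1⟩
  exact hc'T.2 ⟨hc'T.1, hcT.2.tail hRcc'⟩

lemma conn_step (hN : 2 ≤ N) (hD : IsDigitSet N D) (h3 : IsConnected (approx N D 3))
    {n : ℕ} (hn : 2 ≤ n) (hc : IsConnected (approx N D n)) :
    IsConnected (approx N D (n + 1)) := by
  have hDne : D.Nonempty := Finset.card_pos.mp (lt_of_lt_of_le (by norm_num) hD.1)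
  rw [approx_succ_eq_biUnion]
  apply IsConnected.biUnion_of_reflTransGen
  · exact ⟨hDne.choose, hDne.choose_spec⟩
  · intro c _
    exact hc.image _ (continuous_fmap c).continuousOn
  · intro i hi j hj
    refine Relation.ReflTransGen.mono ?_ _ _ (reflTransGen_of_connected hN hD h3 i hi j hj)
    rintro a b ⟨hab, haD⟩
    refine ⟨?_, haD⟩
    rw [piece_inter_nonempty_iff hN] at hab ⊢
    exact del_two_subset hN hD n hn hab

lemma conn_all (hN : 2 ≤ N) (hD : IsDigitSet N D) (h3 : IsConnected (approx N D 3)) :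
    ∀ m, IsConnected (approx N D (m + 3)) := by
  intro m
  induction m with
  | zero => exact h3
  | succ m ih => exact conn_step hN hD h3 (by omega) ih

end Glue

section IInter

lemma isConnected_iInter_nat {X : Type*} [TopologicalSpace X] [T2Space X] {s : ℕ → Set X}
    (hcomp : ∀ n, IsCompact (s n)) (hconn : ∀ n, IsConnected (s n))
    (hanti : Antitone s) : IsConnected (⋂ n, s n) := by
  classical
  have hcl : ∀ n, IsClosed (s n) := fun n => (hcomp n).isClosed
  have hdir : Directed (· ⊇ ·) s := hanti.directed_ge
  have hne : (⋂ n, s n).Nonempty :=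
    IsCompact.nonempty_iInter_of_directed_nonempty_isCompact_isClosed s hdir
      (fun n => (hconn n).nonempty) hcomp hcl
  refine ⟨hne, ?_⟩
  intro u v hu hv hcover ⟨x, hxK, hxu⟩ ⟨y, hyK, hyv⟩
  by_contra hempty
  rw [Set.not_nonempty_iff_eq_empty] at hempty
  set K := ⋂ n, s n with hK
  have hKcl : IsClosed K := isClosed_iInter hcl
  have hKsub : ∀ n, K ⊆ s n := fun n => iInter_subset s n
  have hKuv : K ⊆ u ∪ v := hcover
  set A := K \ v with hA
  set B := K \ u with hB
  have hAcl : IsClosed A := hKcl.sdiff hv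
  have hBcl : IsClosed B := hKcl.sdiff hu
  have hAcomp : IsCompact A := (hcomp 0).of_isClosed_subset hAcl (diff_subset.trans (hKsub 0))
  have hBcomp : IsCompact B := (hcomp 0).of_isClosed_subset hBcl (diff_subset.trans (hKsub 0))
  have hdisjAB : Disjoint A B := by
    rw [Set.disjoint_iff]
    rintro z ⟨⟨hzK, hzv⟩, _, hzu⟩
    rcases hKuv hzK with h | h
    · exact hzu h
    · exact hzv h
  obtain ⟨u', v', hu'o, hv'o, hAu', hBv', hdisj'⟩ :=
    SeparatedNhds.of_isCompact_isCompact hAcomp hBcomp hdisjAB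
  have hxA : x ∈ A := by
    refine ⟨hxK, fun hxv => ?_⟩
    have : x ∈ K ∩ (u ∩ v) := ⟨hxK, hxu, hxv⟩
    rw [hempty] at this
    exact this
  have hyB : y ∈ B := by
    refine ⟨hyK, fun hyu => ?_⟩
    have : y ∈ K ∩ (u ∩ v) := ⟨hyK, hyu, hyv⟩
    rw [hempty] at this
    exact this
  have hsubn : ∃ n, s n ⊆ u' ∪ v' := by
    by_contra hns
    push_neg at hns
    have htne : ∀ n, (s n \ (u' ∪ v')).Nonempty := fun n =>
      Set.diff_nonempty.2 (hns n)
    have htcomp : ∀ n, IsCompact (s n \ (u' ∪ v')) := fun n =>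
      (hcomp n).diff (hu'o.union hv'o)
    have htcl : ∀ n, IsClosed (s n \ (u' ∪ v')) := fun n =>
      (hcl n).sdiff (hu'o.union hv'o)
    have htdir : Directed (· ⊇ ·) (fun n => s n \ (u' ∪ v')) := by
      intro a b
      obtain ⟨c, hca, hcb⟩ := hdir a b
      exact ⟨c, diff_subset_diff_left hca, diff_subset_diff_left hcb⟩
    obtain ⟨z, hz⟩ := IsCompact.nonempty_iInter_of_directed_nonempty_isCompact_isClosed
      _ htdir htne htcomp htcl
    rw [mem_iInter] at hz
    have hzK : z ∈ K := mem_iInter.2 fun n => ((hz n).1)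
    have hznot : z ∉ u' ∪ v' := (hz 0).2
    rcases hKuv hzK with h | h
    · have hzA : z ∈ A := by
        refine ⟨hzK, fun hzv => ?_⟩
        have : z ∈ K ∩ (u ∩ v) := ⟨hzK, h, hzv⟩
        rw [hempty] at this
        exact this
      exact hznot (Or.inl (hAu' hzA))
    · have hzB : z ∈ B := by
        refine ⟨hzK, fun hzu => ?_⟩
        have : z ∈ K ∩ (u ∩ v) := ⟨hzK, hzu, h⟩
        rw [hempty] at this
        exact this
      exact hznot (Or.inr (hBv' hzB))
  obtain ⟨n, hsn⟩ := hsubn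
  have hpre := (hconn n).isPreconnected
  have hmeet1 : (s n ∩ u').Nonempty := ⟨x, hKsub n hxK, hAu' hxA⟩
  have hmeet2 : (s n ∩ v').Nonempty := ⟨y, hKsub n hyK, hBv' hyB⟩
  obtain ⟨z, _, hzu', hzv'⟩ := hpre u' v' hu'o hv'o hsn hmeet1 hmeet2
  exact (Set.disjoint_iff.1 hdisj' ⟨hzu', hzv'⟩)

end IInter
/-- If the third approximation `K⁽³⁾` is connected, then `K` is connected. -/
theorem stmt4 (N : ℕ) (hN : 2 ≤ N) (D : Finset (ℤ × ℤ)) (hD : IsDigitSet N D)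
    (h3 : IsConnected (approx N D 3)) : IsConnected (FS N D) := by
  have key := conn_all hN hD h3
  have hFS : FS N D = ⋂ m, approx N D (m + 3) := by
    apply Set.Subset.antisymm
    · intro x hx
      simp only [FS, mem_iInter] at hx ⊢
      intro m
      have := hx (m + 2)
      rwa [show m + 2 + 1 = m + 3 from rfl] at this
    · intro x hx
      simp only [FS, mem_iInter] at hx ⊢
      intro n
      exact approx_le_subset hN hD (by omega : n + 1 ≤ n + 3) (hx n)
  rw [hFS]
  exact isConnected_iInter_nat (fun m => isCompact_approx (m + 3)) key
    (fun a b hab => approx_le_subset hN hD (by omega : a + 3 ≤ b + 3))
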